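/- Fix n ≥ 1 and λ ∈ ℝ. Consider the 2ⁿ × 2ⁿ matrix S = e^{iλ}·σ₀₁ ⊗ σ₁₀^{⊗(n−1)} + e^{−iλ}·σ₁₀ ⊗ σ₀₁^{⊗(n−1)} and let Λ = Z ⊗ σ₁₁^{⊗(n−1)}. Regard the first Kronecker factor as the n-th qubit, and for 1 ≤ k ≤ n−1 let CNOTₖⁿ = σ₀₀ ⊗ I_{2^{n−1}} + σ₁₁ ⊗ (I₂^{⊗(n−1−k)} ⊗ X ⊗ I₂^{⊗(k−1)}) be the CNOT gate acting on the k-th qubit controlled by the n-th qubit. Define the unitary V(λ) := (∏_{k=1}^{n−1} CNOTₖⁿ) · (P(−λ) ⊗ I_{2^{n−1}}) · (H ⊗ I_{2^{n−1}}). Then S = V(λ) · Λ · V(λ)†; in particular S is unitarily similar to Z ⊗ σ₁₁^{⊗(n−1)} via gates built from Hadamard, phase and CNOT gates. -/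

import Mathlib

open Matrix
open scoped Kronecker Matrix

/-- The single-qubit matrix `σ_{ab} = |a⟩⟨b|`. -/
noncomputable def sigma (a b : Fin 2) : Matrix (Fin 2) (Fin 2) ℂ :=
  Matrix.single a b 1

/-- `kronList n L` is the Kronecker product `L 0 ⊗ L 1 ⊗ ⋯ ⊗ L (n−1)` of `n`
`2×2` matrices, with `L 0` the leftmost (most significant, i.e. the `n`-th qubit)
factor, realized as a `2^n × 2^n` matrix. -/
noncomputable def kronList : (n : ℕ) → (ℕ → Matrix (Fin 2) (Fin 2) ℂ) →
    Matrix (Fin (2 ^ n)) (Fin (2 ^ n)) ℂ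
  | 0, _ => 1
  | n + 1, L =>
    Matrix.reindex (finProdFinEquiv.trans (finCongr (by ring)))
      (finProdFinEquiv.trans (finCongr (by ring)))
      ((L 0) ⊗ₖ kronList n (fun i => L (i + 1)))

/-- The Pauli `X` gate. -/
noncomputable def Xgate : Matrix (Fin 2) (Fin 2) ℂ := !![0, 1; 1, 0]

/-- The Pauli `Z` gate. -/
noncomputable def Zgate : Matrix (Fin 2) (Fin 2) ℂ := !![1, 0; 0, -1]

/-- The Hadamard gate `H = (1/√2)[[1,1],[1,−1]]`. -/
noncomputable def Hgate : Matrix (Fin 2) (Fin 2) ℂ :=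
  (Real.sqrt 2)⁻¹ • !![1, 1; 1, -1]

/-- The phase gate `P(θ) = diag(1, e^{iθ})`. -/
noncomputable def Pgate (θ : ℝ) : Matrix (Fin 2) (Fin 2) ℂ :=
  !![1, 0; 0, Complex.exp (θ * Complex.I)]

/-- `S = e^{iλ} σ₀₁ ⊗ σ₁₀^{⊗(n−1)} + e^{−iλ} σ₁₀ ⊗ σ₀₁^{⊗(n−1)}`. -/
noncomputable def Sshift (n : ℕ) (lam : ℝ) : Matrix (Fin (2 ^ n)) (Fin (2 ^ n)) ℂ :=
  Complex.exp (lam * Complex.I) •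
      kronList n (fun i => if i = 0 then sigma 0 1 else sigma 1 0) +
    Complex.exp (-lam * Complex.I) •
      kronList n (fun i => if i = 0 then sigma 1 0 else sigma 0 1)

/-- `Λ = Z ⊗ σ₁₁^{⊗(n−1)}`. -/
noncomputable def LambdaMat (n : ℕ) : Matrix (Fin (2 ^ n)) (Fin (2 ^ n)) ℂ :=
  kronList n (fun i => if i = 0 then Zgate else sigma 1 1)

/-- `CNOTₖⁿ = σ₀₀ ⊗ I_{2^{n−1}} + σ₁₁ ⊗ (I₂^{⊗(n−1−k)} ⊗ X ⊗ I₂^{⊗(k−1)})`: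
the CNOT gate on the `k`-th qubit (counted from the right, `1 ≤ k ≤ n−1`)
controlled by the `n`-th (leftmost) qubit. -/
noncomputable def CNOTgate (n k : ℕ) : Matrix (Fin (2 ^ n)) (Fin (2 ^ n)) ℂ :=
  kronList n (fun i => if i = 0 then sigma 0 0 else 1) +
    kronList n (fun i => if i = 0 then sigma 1 1 else if i = n - k then Xgate else 1)

/-- `V(λ) = (∏_{k=1}^{n−1} CNOTₖⁿ) · (P(−λ) ⊗ I) · (H ⊗ I)`. -/
noncomputable def Vgate (n : ℕ) (lam : ℝ) : Matrix (Fin (2 ^ n)) (Fin (2 ^ n)) ℂ :=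
  ((List.range (n - 1)).map (fun k => CNOTgate n (k + 1))).prod *
    kronList n (fun i => if i = 0 then Pgate (-lam) else 1) *
    kronList n (fun i => if i = 0 then Hgate else 1)

/-! Split off the control (leftmost) qubit: every matrix in the statement is the image of a
Kronecker product `A ⊗ₖ B` with `A` a `2 × 2` matrix and `B` acting on the other `n - 1` qubits.
The CNOT cascade is the single controlled gate `σ₀₀ ⊗ I + σ₁₁ ⊗ X^{⊗(n-1)}`, and `P(-λ) H`
conjugates `Z` into `e^{iλ} σ₀₁ + e^{-iλ} σ₁₀`. Conjugating by the controlled gate then multiplies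
`σ₁₁^{⊗(n-1)}` by `X^{⊗(n-1)}` on the right in the `σ₀₁` block and on the left in the `σ₁₀` block,
and `σ₁₁ X = σ₁₀`, `X σ₁₁ = σ₀₁`. -/

lemma sigma_mul_sigma (a b c d : Fin 2) :
    sigma a b * sigma c d = if b = c then sigma a d else 0 := by
  unfold sigma
  split_ifs with h
  · rw [h, single_mul_single_same, one_mul]
  · exact single_mul_single_of_ne (h := h) ..

lemma conjTranspose_sigma (a b : Fin 2) : (sigma a b)ᴴ = sigma b a := by
  simp [sigma]

lemma sigma_zero_zero_add_sigma_one_one : sigma 0 0 + sigma 1 1 = 1 := by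
  ext i j
  fin_cases i <;> fin_cases j <;> simp [sigma]

lemma sigma_one_one_mul_Xgate : sigma 1 1 * Xgate = sigma 1 0 := by
  ext i j
  fin_cases i <;> fin_cases j <;> simp [sigma, Xgate, mul_apply]

lemma Xgate_mul_sigma_one_one : Xgate * sigma 1 1 = sigma 0 1 := by
  ext i j
  fin_cases i <;> fin_cases j <;> simp [sigma, Xgate, mul_apply]

lemma conjTranspose_Xgate : Xgateᴴ = Xgate := by
  ext i j
  fin_cases i <;> fin_cases j <;> simp [Xgate]

lemma Hgate_mul_Zgate_mul_conjTranspose : Hgate * Zgate * Hgateᴴ = Xgate := by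
  have hsqrt : ((Real.sqrt 2 : ℝ) : ℂ) ^ 2 = 2 := by norm_cast; simp
  ext i j
  fin_cases i <;> fin_cases j <;> simp [Hgate, Zgate, Xgate, mul_apply] <;> field_simp <;>
    norm_num [hsqrt]

lemma Pgate_neg_mul_Xgate_mul_conjTranspose (lam : ℝ) :
    Pgate (-lam) * Xgate * (Pgate (-lam))ᴴ =
      Complex.exp (lam * Complex.I) • sigma 0 1 + Complex.exp (-lam * Complex.I) • sigma 1 0 := by
  ext i j
  fin_cases i <;> fin_cases j <;> simp [Pgate, Xgate, sigma, mul_apply, ← Complex.exp_conj]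

lemma phase_hadamard_conj_Zgate (lam : ℝ) :
    Pgate (-lam) * Hgate * Zgate * (Pgate (-lam) * Hgate)ᴴ =
      Complex.exp (lam * Complex.I) • sigma 0 1 + Complex.exp (-lam * Complex.I) • sigma 1 0 := by
  rw [conjTranspose_mul, ← Pgate_neg_mul_Xgate_mul_conjTranspose,
    ← Hgate_mul_Zgate_mul_conjTranspose]
  simp only [mul_assoc]

section Controlled

variable {ι : Type*} [DecidableEq ι]

noncomputable def controlled (U : Matrix ι ι ℂ) : Matrix (Fin 2 × ι) (Fin 2 × ι) ℂ :=
  sigma 0 0 ⊗ₖ 1 + sigma 1 1 ⊗ₖ U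

lemma controlled_mul [Fintype ι] (U W : Matrix ι ι ℂ) :
    controlled U * controlled W = controlled (U * W) := by
  simp [controlled, add_mul, mul_add, ← mul_kronecker_mul, sigma_mul_sigma]

lemma controlled_one : controlled (1 : Matrix ι ι ℂ) = 1 := by
  rw [controlled, ← add_kronecker, sigma_zero_zero_add_sigma_one_one, one_kronecker_one]

lemma conjTranspose_controlled (U : Matrix ι ι ℂ) : (controlled U)ᴴ = controlled Uᴴ := by
  simp [controlled, conjTranspose_kronecker, conjTranspose_sigma]

lemma controlled_mul_sigma_kronecker_mul_controlled [Fintype ι] (a b : Fin 2)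
    (U E : Matrix ι ι ℂ) :
    controlled U * (sigma a b ⊗ₖ E) * controlled U =
      sigma a b ⊗ₖ (U ^ (a : ℕ) * E * U ^ (b : ℕ)) := by
  fin_cases a <;> fin_cases b <;>
    simp [controlled, add_mul, mul_add, ← mul_kronecker_mul, sigma_mul_sigma]

end Controlled

noncomputable def qubitReindex (m : ℕ) :
    Matrix (Fin 2 × Fin (2 ^ m)) (Fin 2 × Fin (2 ^ m)) ℂ ≃ₐ[ℂ]
      Matrix (Fin (2 ^ (m + 1))) (Fin (2 ^ (m + 1))) ℂ :=
  reindexAlgEquiv ℂ ℂ (finProdFinEquiv.trans (finCongr (by ring)))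

lemma conjTranspose_qubitReindex (m : ℕ)
    (M : Matrix (Fin 2 × Fin (2 ^ m)) (Fin 2 × Fin (2 ^ m)) ℂ) :
    (qubitReindex m M)ᴴ = qubitReindex m Mᴴ :=
  rfl

lemma kronList_succ (m : ℕ) (L : ℕ → Matrix (Fin 2) (Fin 2) ℂ) :
    kronList (m + 1) L = qubitReindex m (L 0 ⊗ₖ kronList m fun i => L (i + 1)) :=
  rfl

lemma kronList_congr (n : ℕ) {L L' : ℕ → Matrix (Fin 2) (Fin 2) ℂ} (h : ∀ i < n, L i = L' i) :
    kronList n L = kronList n L' := by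
  induction n generalizing L L' with
  | zero => rfl
  | succ m ih =>
    rw [kronList_succ, kronList_succ, h 0 m.succ_pos, ih fun i hi => h (i + 1) (by omega)]

lemma kronList_mul (n : ℕ) (L L' : ℕ → Matrix (Fin 2) (Fin 2) ℂ) :
    kronList n L * kronList n L' = kronList n fun i => L i * L' i := by
  induction n generalizing L L' with
  | zero => exact one_mul 1
  | succ m ih =>
    rw [kronList_succ, kronList_succ, ← map_mul, ← mul_kronecker_mul, ih, kronList_succ]

lemma kronList_one (n : ℕ) : kronList n (fun _ => 1) = 1 := by
  induction n with
  | zero => rfl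
  | succ m ih => rw [kronList_succ, ih, one_kronecker_one, map_one]

lemma conjTranspose_kronList (n : ℕ) (L : ℕ → Matrix (Fin 2) (Fin 2) ℂ) :
    (kronList n L)ᴴ = kronList n fun i => (L i)ᴴ := by
  induction n generalizing L with
  | zero => exact conjTranspose_one
  | succ m ih =>
    rw [kronList_succ, conjTranspose_qubitReindex, conjTranspose_kronecker, ih, kronList_succ]

lemma CNOTgate_succ (m k : ℕ) :
    CNOTgate (m + 1) (k + 1) =
      qubitReindex m (controlled (kronList m fun j => if j + 1 = m - k then Xgate else 1)) := by
  simp [CNOTgate, kronList_succ, kronList_one, controlled]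

/-- `CNOTgate (m + 1) (k + 1)` flips the target with `kronList m` index `m - 1 - k`, so the first
`t` of them flip indices `m - t, …, m - 1`. -/
lemma prod_CNOTgate_of_le (m t : ℕ) (ht : t ≤ m) :
    ((List.range t).map fun k => CNOTgate (m + 1) (k + 1)).prod =
      qubitReindex m (controlled (kronList m fun j => if m - t ≤ j then Xgate else 1)) := by
  induction t with
  | zero =>
    rw [kronList_congr m (L' := fun _ => 1) fun j hj => if_neg (by omega), kronList_one,
      controlled_one, map_one, List.range_zero, List.map_nil, List.prod_nil]
  | succ t ih =>
    rw [List.range_succ, List.map_append, List.prod_append, ih (by omega)]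
    simp only [List.map_cons, List.map_nil, List.prod_cons, List.prod_nil, mul_one]
    rw [CNOTgate_succ, ← map_mul, controlled_mul, kronList_mul]
    congr 3
    funext j
    split_ifs <;> first | omega | simp

lemma prod_CNOTgate (m : ℕ) :
    ((List.range m).map fun k => CNOTgate (m + 1) (k + 1)).prod =
      qubitReindex m (controlled (kronList m fun _ => Xgate)) := by
  simp [prod_CNOTgate_of_le m m le_rfl]

lemma controlled_Xgate_conj (m : ℕ) (lam : ℝ) :
    controlled (kronList m fun _ => Xgate) * ((Pgate (-lam) * Hgate) ⊗ₖ 1) *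
        (Zgate ⊗ₖ kronList m fun _ => sigma 1 1) *
        (controlled (kronList m fun _ => Xgate) * ((Pgate (-lam) * Hgate) ⊗ₖ 1))ᴴ =
      Complex.exp (lam * Complex.I) • (sigma 0 1 ⊗ₖ kronList m fun _ => sigma 1 0) +
        Complex.exp (-lam * Complex.I) • (sigma 1 0 ⊗ₖ kronList m fun _ => sigma 0 1) := by
  set C := controlled (kronList m fun _ => Xgate)
  have hC : Cᴴ = C := by
    simp only [C, conjTranspose_controlled, conjTranspose_kronList, conjTranspose_Xgate]
  calc _ = C * ((Pgate (-lam) * Hgate * Zgate * (Pgate (-lam) * Hgate)ᴴ) ⊗ₖ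
          kronList m fun _ => sigma 1 1) * C := by
        rw [conjTranspose_mul, hC, conjTranspose_kronecker, conjTranspose_one, mul_assoc C,
          ← mul_kronecker_mul, one_mul, ← mul_assoc, mul_assoc C, ← mul_kronecker_mul, mul_one]
    _ = _ := by
        rw [phase_hadamard_conj_Zgate, add_kronecker, smul_kronecker, smul_kronecker, mul_add,
          add_mul, mul_smul_comm, smul_mul_assoc, mul_smul_comm, smul_mul_assoc,
          controlled_mul_sigma_kronecker_mul_controlled,
          controlled_mul_sigma_kronecker_mul_controlled]
        simp [kronList_mul, sigma_one_one_mul_Xgate, Xgate_mul_sigma_one_one]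

/-- Bell-basis diagonalization of the shift operator `S`:
`S = V(λ) · Λ · V(λ)†`, where `Λ = Z ⊗ σ₁₁^{⊗(n−1)}` and `V(λ)` is built from
Hadamard, phase and CNOT gates. -/
theorem shift_operator_diagonalization (n : ℕ) (hn : 1 ≤ n) (lam : ℝ) :
    Sshift n lam = Vgate n lam * LambdaMat n * (Vgate n lam)ᴴ := by
  obtain ⟨m, rfl⟩ : ∃ m, n = m + 1 := ⟨n - 1, by omega⟩
  have hV : Vgate (m + 1) lam = qubitReindex m
      (controlled (kronList m fun _ => Xgate) * ((Pgate (-lam) * Hgate) ⊗ₖ 1)) := by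
    rw [Vgate, Nat.add_sub_cancel, prod_CNOTgate, kronList_succ, kronList_succ, mul_assoc,
      ← map_mul, ← map_mul, ← mul_kronecker_mul]
    simp [kronList_one]
  have hΛ : LambdaMat (m + 1) = qubitReindex m (Zgate ⊗ₖ kronList m fun _ => sigma 1 1) := by
    simp [LambdaMat, kronList_succ]
  have hS : Sshift (m + 1) lam = qubitReindex m
      (Complex.exp (lam * Complex.I) • (sigma 0 1 ⊗ₖ kronList m fun _ => sigma 1 0) +
        Complex.exp (-lam * Complex.I) • (sigma 1 0 ⊗ₖ kronList m fun _ => sigma 0 1)) := by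
    simp [Sshift, kronList_succ]
  rw [hS, hΛ, hV, conjTranspose_qubitReindex, ← map_mul, ← map_mul, controlled_Xgate_conj]
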